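/- Completeness of the extensions of DmbC with respect to swap Kripke models: for each logic L ∈ {DmbCciw, DmbCci, DbC, DCi} and every set of formulas Γ ∪ {φ} ⊆ For(Σ), if Γ ⊨_L φ then Γ ⊢_L φ. -/

import Mathlib

/-- Formulas over the signature Σ = {∧, ∨, →, ¬, ∘, O}, with countably many
propositional variables. -/
inductive Form : Type
  | var : ℕ → Form
  | and : Form → Form → Form
  | or : Form → Form → Form
  | imp : Form → Form → Form
  | neg : Form → Form
  | circ : Form → Form
  | obl : Form → Form

namespace Form
/-- ⊥_α := (α ∧ ¬α) ∧ ∘α -/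
def bot (α : Form) : Form := (α.and α.neg).and α.circ
end Form

/-- Theorems of the extension of DmbC by the extra axiom schemas in `E`:
CPL⁺ axioms, (EM), (bc), (O-K), (O-E), the axioms in `E`,
with rules Modus Ponens and O-necessitation. -/
inductive ThmExt (E : Form → Prop) : Form → Prop
  | A1 (α β : Form) : ThmExt E (α.imp (β.imp α))
  | A2 (α β γ : Form) : ThmExt E ((α.imp (β.imp γ)).imp ((α.imp β).imp (α.imp γ)))
  | A3 (α β : Form) : ThmExt E (α.imp (β.imp (α.and β)))
  | A4 (α β : Form) : ThmExt E ((α.and β).imp α)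
  | A5 (α β : Form) : ThmExt E ((α.and β).imp β)
  | A6 (α β : Form) : ThmExt E (α.imp (α.or β))
  | A7 (α β : Form) : ThmExt E (β.imp (α.or β))
  | A8 (α β γ : Form) : ThmExt E ((α.imp γ).imp ((β.imp γ).imp ((α.or β).imp γ)))
  | A9 (α β : Form) : ThmExt E (((α.imp β).imp α).imp α)
  | EM (α : Form) : ThmExt E (α.or α.neg)
  | bc (α β : Form) : ThmExt E (α.circ.imp (α.imp (α.neg.imp β)))
  | OK (α β : Form) : ThmExt E ((α.imp β).obl.imp (α.obl.imp β.obl))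
  | OE (α : Form) : ThmExt E (α.bot.obl.imp α.bot)
  | extra {φ : Form} : E φ → ThmExt E φ
  | mp {α β : Form} : ThmExt E (α.imp β) → ThmExt E α → ThmExt E β
  | nec {α : Form} : ThmExt E α → ThmExt E α.obl

/-- Instances of axiom (ciw) ∘α ∨ (α ∧ ¬α). -/
def ciwAx (φ : Form) : Prop := ∃ α : Form, φ = α.circ.or (α.and α.neg)

/-- Instances of axiom (ci) ¬∘α → (α ∧ ¬α). -/
def ciAx (φ : Form) : Prop := ∃ α : Form, φ = α.circ.neg.imp (α.and α.neg)

/-- Instances of axiom (cf) ¬¬α → α. -/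
def cfAx (φ : Form) : Prop := ∃ α : Form, φ = α.neg.neg.imp α

/-- The four extensions of DmbC considered here. -/
inductive ExtLogic : Type
  | DmbCciw | DmbCci | DbC | DCi

/-- The extra axiom schemas of each logic. -/
def extAx : ExtLogic → Form → Prop
  | .DmbCciw => ciwAx
  | .DmbCci => ciAx
  | .DbC => cfAx
  | .DCi => fun φ => ciAx φ ∨ cfAx φ

/-- conj γ [γ₂,…,γ_k] = γ ∧ γ₂ ∧ … ∧ γ_k -/
def conj (γ : Form) : List Form → Form
  | [] => γ
  | δ :: l => γ.and (conj δ l)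

/-- Γ ⊢_L φ iff ⊢_L φ or ⊢_L (γ₁ ∧ … ∧ γ_k) → φ for some γ₁,…,γ_k ∈ Γ, k ≥ 1. -/
def DerivExt (L : ExtLogic) (Γ : Set Form) (φ : Form) : Prop :=
  ThmExt (extAx L) φ ∨ ∃ (γ : Form) (l : List Form),
    (∀ δ ∈ γ :: l, δ ∈ Γ) ∧ ThmExt (extAx L) ((conj γ l).imp φ)

/-- The three snapshots T = (1,0), t = (1,1), F = (0,1). -/
inductive SV : Type
  | T | t | F
deriving DecidableEq

/-- First coordinate of a snapshot. -/
def SV.p1 : SV → Bool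
  | .T => true | .t => true | .F => false

/-- Second coordinate of a snapshot. -/
def SV.p2 : SV → Bool
  | .T => false | .t => true | .F => true

/-- Designated values: D = {T, t}, i.e. first coordinate is 1. -/
def SV.desig (a : SV) : Prop := a.p1 = true

/-- Membership condition for the multioperation interpreting ¬ in each logic:
¬̃ for DmbCciw and DmbCci, ¬̃₁ for DbC and DCi.  Here `c` is the candidate value
of ¬α and `a` the value of α. -/
def negCond : ExtLogic → SV → SV → Prop
  | .DmbCciw, c, a => c.p1 = a.p2
  | .DmbCci, c, a => c.p1 = a.p2
  | .DbC, c, a => c.p1 = a.p2 ∧ c.p2 ≤ a.p1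
  | .DCi, c, a => c.p1 = a.p2 ∧ c.p2 ≤ a.p1

/-- Membership condition for the multioperation interpreting ∘ in each logic:
∘̃₁ for DmbCciw, ∘̃₂ for DmbCci and DCi, ∘̃ for DbC. -/
def circCond : ExtLogic → SV → SV → Prop
  | .DmbCciw, c, a => c.p1 = !(a.p1 && a.p2)
  | .DmbCci, c, a => c.p1 = !(a.p1 && a.p2) ∧ c.p2 = (a.p1 && a.p2)
  | .DbC, c, a => c.p1 ≤ !(a.p1 && a.p2)
  | .DCi, c, a => c.p1 = !(a.p1 && a.p2) ∧ c.p2 = (a.p1 && a.p2)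

/-- Swap Kripke model conditions for the logic L on a serial frame (W,R) with
valuations v_w : Form → SV. -/
structure IsModelExt (L : ExtLogic) {W : Type} (R : W → W → Prop)
    (v : W → Form → SV) : Prop where
  serial : ∀ w, ∃ w', R w w'
  and_ : ∀ w α β, (v w (α.and β)).p1 = ((v w α).p1 && (v w β).p1)
  or_ : ∀ w α β, (v w (α.or β)).p1 = ((v w α).p1 || (v w β).p1)
  imp_ : ∀ w α β, (v w (α.imp β)).p1 = (!(v w α).p1 || (v w β).p1)
  neg_ : ∀ w α, negCond L (v w α.neg) (v w α)
  circ_ : ∀ w α, circCond L (v w α.circ) (v w α)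
  obl_ : ∀ w α, ((v w α.obl).p1 = true ↔ ∀ w', R w w' → (v w' α).p1 = true)

/-- Γ ⊨_L φ : semantic consequence over all swap Kripke models for L. -/
def SemExt (L : ExtLogic) (Γ : Set Form) (φ : Form) : Prop :=
  ∀ (W : Type) (R : W → W → Prop) (v : W → Form → SV), Nonempty W →
    IsModelExt L R v → ∀ w : W, (∀ γ ∈ Γ, (v w γ).desig) → (v w φ).desig

/-! Canonical model. Its worlds are the sets `Δ` saturated for some `ψ`: `Δ ⊬ ψ`, but
`Δ, β ⊢ ψ` for every `β ∉ Δ`. Such sets are deductively closed and prime, so by (EM) `α ∉ Δ`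
forces `¬α ∈ Δ`, and the value of `α` at `Δ` is the pair `(α ∈ Δ, ¬α ∈ Δ)`, never `(0,0)`.
`Δ R Δ'` means `{β | Oβ ∈ Δ} ⊆ Δ'`: by (O-K) and necessitation, `{β | Oβ ∈ Δ} ⊢ α` implies
`Δ ⊢ Oα`, so when `Oα ∉ Δ` a saturated extension of `{β | Oβ ∈ Δ}` avoiding `α` exists, and
(O-E) keeps `{β | Oβ ∈ Δ}` from deriving `⊥_α`, which makes `R` serial. The axioms (cf), (ciw)
and (ci) give exactly the extra constraints of `¬̃₁`, `∘̃₁` and `∘̃₂`. If `Γ ⊬ φ`, Zorn's lemma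
extends `Γ` to a `φ`-saturated world, where `Γ` holds and `φ` fails. -/

variable {E : Form → Prop}

namespace ThmExt

theorem imp_self (α : Form) : ThmExt E (α.imp α) :=
  .mp (.mp (.A2 α (α.imp α) α) (.A1 α (α.imp α))) (.A1 α α)

theorem imp_trans {α β γ : Form} (h₁ : ThmExt E (α.imp β)) (h₂ : ThmExt E (β.imp γ)) :
    ThmExt E (α.imp γ) :=
  .mp (.mp (.A2 α β γ) (.mp (.A1 (β.imp γ) α) h₂)) h₁

theorem ciw_of_ci {α : Form} (hci : ThmExt E (α.circ.neg.imp (α.and α.neg))) :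
    ThmExt E (α.circ.or (α.and α.neg)) :=
  .mp (.mp (.mp (.A8 _ _ _) (.A6 _ _)) (imp_trans hci (.A7 _ _))) (.EM _)

theorem conj_imp_of_mem {γ δ : Form} {l : List Form} (h : δ ∈ γ :: l) :
    ThmExt E ((conj γ l).imp δ) := by
  induction l generalizing γ with
  | nil => rw [List.mem_singleton.1 h]; exact imp_self _
  | cons ε l ih =>
    rcases List.mem_cons.1 h with rfl | h
    · exact .A4 _ _
    · exact imp_trans (.A5 _ _) (ih h)

end ThmExt

inductive Der (E : Form → Prop) (Γ : Set Form) : Form → Prop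
  | thm {φ : Form} : ThmExt E φ → Der E Γ φ
  | hyp {φ : Form} : φ ∈ Γ → Der E Γ φ
  | mp {α β : Form} : Der E Γ (α.imp β) → Der E Γ α → Der E Γ β

namespace Der

variable {Γ Δ : Set Form} {α β φ : Form}

theorem cut (h : ∀ δ ∈ Δ, Der E Γ δ) (hd : Der E Δ φ) : Der E Γ φ := by
  induction hd with
  | thm h' => exact .thm h'
  | hyp h' => exact h _ h'
  | mp _ _ ih₁ ih₂ => exact .mp ih₁ ih₂

theorem mono (h : Δ ⊆ Γ) (hd : Der E Δ φ) : Der E Γ φ :=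
  hd.cut fun _ hδ => .hyp (h hδ)

theorem deduction (h : Der E (insert α Γ) β) : Der E Γ (α.imp β) := by
  induction h with
  | @thm φ h' => exact .mp (.thm (.A1 φ α)) (.thm h')
  | @hyp φ h' =>
    rcases h' with rfl | h'
    · exact .thm (.imp_self _)
    · exact .mp (.thm (.A1 φ α)) (.hyp h')
  | mp _ _ ih₁ ih₂ => exact .mp (.mp (.thm (.A2 α _ _)) ih₁) ih₂

theorem thmExt (h : Der E ∅ φ) : ThmExt E φ := by
  induction h with
  | thm h' => exact h'
  | hyp h' => exact absurd h' (Set.notMem_empty _)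
  | mp _ _ ih₁ ih₂ => exact .mp ih₁ ih₂

theorem exists_list (h : Der E Γ φ) :
    ∃ l : List Form, (∀ δ ∈ l, δ ∈ Γ) ∧ Der E {δ | δ ∈ l} φ := by
  induction h with
  | @thm φ h' => exact ⟨[], by simp, .thm h'⟩
  | @hyp φ h' => exact ⟨[φ], by simp [h'], .hyp (by simp)⟩
  | mp _ _ ih₁ ih₂ =>
    obtain ⟨l₁, hl₁, d₁⟩ := ih₁
    obtain ⟨l₂, hl₂, d₂⟩ := ih₂
    refine ⟨l₁ ++ l₂, ?_, .mp (d₁.mono ?_) (d₂.mono ?_)⟩ <;> intro δ <;>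
      simp only [List.mem_append]
    exacts [fun h => h.elim (hl₁ δ) (hl₂ δ), .inl, .inr]

theorem thmExt_or_exists_conj (h : Der E Γ φ) : ThmExt E φ ∨ ∃ (γ : Form) (l : List Form),
    (∀ δ ∈ γ :: l, δ ∈ Γ) ∧ ThmExt E ((conj γ l).imp φ) := by
  obtain ⟨_ | ⟨γ, l⟩, hl, hd⟩ := h.exists_list
  · exact .inl (hd.mono (by simp)).thmExt
  · refine .inr ⟨γ, l, hl, (hd.cut fun δ hδ => ?_).deduction.thmExt⟩
    exact .mp (.thm (ThmExt.conj_imp_of_mem hδ)) (.hyp (Set.mem_insert _ _))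

theorem obl_and (h₁ : Der E Γ α.obl) (h₂ : Der E Γ β.obl) : Der E Γ (α.and β).obl :=
  .mp (.mp (.thm (.OK β _)) (.mp (.mp (.thm (.OK α _)) (.thm (.nec (.A3 α β)))) h₁)) h₂

theorem obl_conj {γ : Form} {l : List Form} (h : ∀ δ ∈ γ :: l, Der E Γ δ.obl) :
    Der E Γ (conj γ l).obl := by
  induction l generalizing γ with
  | nil => exact h γ (by simp)
  | cons ε l ih => exact obl_and (h γ (by simp)) (ih fun δ hδ => h δ (by simp_all))

theorem obl (h : Der E {β | β.obl ∈ Γ} α) : Der E Γ α.obl := by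
  rcases h.thmExt_or_exists_conj with h | ⟨γ, l, hl, h⟩
  · exact .thm (.nec h)
  · exact .mp (.mp (.thm (.OK _ _)) (.thm (.nec h))) (obl_conj fun δ hδ => .hyp (hl δ hδ))

end Der

namespace ThmExt

theorem or_imp (α β : Form) : ThmExt E (α.or (α.imp β)) := by
  have hα : Der E (insert α (insert ((α.or (α.imp β)).imp β) ∅)) β :=
    .mp (.hyp (by simp)) (.mp (.thm (.A6 α (α.imp β))) (.hyp (by simp)))
  have h : Der E (insert ((α.or (α.imp β)).imp β) ∅) (α.or (α.imp β)) :=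
    .mp (.thm (.A7 α (α.imp β))) hα.deduction
  exact (Der.mp (.thm (.A9 _ β)) h.deduction).thmExt

theorem bot_imp (α β : Form) : ThmExt E (α.bot.imp β) := by
  have hbot : Der E (insert α.bot ∅) α.bot := .hyp (by simp)
  have hcon : Der E (insert α.bot ∅) (α.and α.neg) := .mp (.thm (.A4 _ _)) hbot
  exact (Der.mp (.mp (.mp (.thm (.bc α β)) (.mp (.thm (.A5 _ _)) hbot))
    (.mp (.thm (.A4 _ _)) hcon)) (.mp (.thm (.A5 _ _)) hcon)).deduction.thmExt

end ThmExt

def Saturated (E : Form → Prop) (ψ : Form) (Δ : Set Form) : Prop :=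
  ¬ Der E Δ ψ ∧ ∀ β ∉ Δ, Der E (insert β Δ) ψ

theorem exists_saturated_superset {Γ : Set Form} {ψ : Form} (h : ¬ Der E Γ ψ) :
    ∃ Δ, Γ ⊆ Δ ∧ Saturated E ψ Δ := by
  obtain ⟨Δ, hΓΔ, hΔ⟩ := zorn_subset_nonempty {Δ | ¬ Der E Δ ψ} (fun c hc hchain hne => by
    refine ⟨⋃₀ c, fun hd => ?_, fun _ => Set.subset_sUnion_of_mem⟩
    obtain ⟨l, hl, hd⟩ := hd.exists_list
    obtain ⟨Δ, hΔc, hlΔ⟩ :=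
      hchain.directedOn.exists_mem_subset_of_finite_of_subset_sUnion hne l.finite_toSet hl
    exact hc hΔc (hd.mono hlΔ)) Γ h
  exact ⟨Δ, hΓΔ, hΔ.1, fun β hβ => by_contra fun hd =>
    hβ (hΔ.2 hd (Set.subset_insert β Δ) (Set.mem_insert β Δ))⟩

namespace Saturated

variable {ψ α β : Form} {Δ : Set Form}

theorem mem_of_der (hS : Saturated E ψ Δ) (h : Der E Δ α) : α ∈ Δ :=
  by_contra fun hα => hS.1 ((hS.2 α hα).cut fun _ hδ => hδ.elim (· ▸ h) .hyp)

theorem mem_of_thmExt (hS : Saturated E ψ Δ) (h : ThmExt E α) : α ∈ Δ :=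
  hS.mem_of_der (.thm h)

theorem mem_of_imp (hS : Saturated E ψ Δ) (h : ThmExt E (α.imp β)) (hα : α ∈ Δ) : β ∈ Δ :=
  hS.mem_of_der (.mp (.thm h) (.hyp hα))

theorem mem_or (hS : Saturated E ψ Δ) : α.or β ∈ Δ ↔ α ∈ Δ ∨ β ∈ Δ := by
  refine ⟨fun h => ?_, fun h => h.elim (hS.mem_of_imp (.A6 α β)) (hS.mem_of_imp (.A7 α β))⟩
  by_contra! hn
  exact hS.1 (.mp (.mp (.mp (.thm (.A8 α β ψ)) (hS.2 α hn.1).deduction)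
    (hS.2 β hn.2).deduction) (.hyp h))

theorem mem_and (hS : Saturated E ψ Δ) : α.and β ∈ Δ ↔ α ∈ Δ ∧ β ∈ Δ :=
  ⟨fun h => ⟨hS.mem_of_imp (.A4 α β) h, hS.mem_of_imp (.A5 α β) h⟩,
    fun h => hS.mem_of_der (.mp (.mp (.thm (.A3 α β)) (.hyp h.1)) (.hyp h.2))⟩

theorem mem_imp (hS : Saturated E ψ Δ) : α.imp β ∈ Δ ↔ (α ∈ Δ → β ∈ Δ) := by
  refine ⟨fun h hα => hS.mem_of_der (.mp (.hyp h) (.hyp hα)), fun h => ?_⟩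
  rcases hS.mem_or.1 (hS.mem_of_thmExt (.or_imp α β)) with hα | himp
  exacts [hS.mem_of_imp (.A1 β α) (h hα), himp]

theorem neg_mem (hS : Saturated E ψ Δ) (h : α ∉ Δ) : α.neg ∈ Δ :=
  (hS.mem_or.1 (hS.mem_of_thmExt (.EM α))).resolve_left h

theorem not_and_of_circ_mem (hS : Saturated E ψ Δ) (hc : α.circ ∈ Δ) :
    ¬ (α ∈ Δ ∧ α.neg ∈ Δ) := fun h =>
  hS.1 (.mp (.mp (.mp (.thm (.bc α ψ)) (.hyp hc)) (.hyp h.1)) (.hyp h.2))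

end Saturated

def CanonicalWorld (E : Form → Prop) : Type := {Δ : Set Form // ∃ ψ, Saturated E ψ Δ}

def CanonicalRel (E : Form → Prop) (Δ Δ' : CanonicalWorld E) : Prop :=
  {β | β.obl ∈ Δ.1} ⊆ Δ'.1

open Classical in
noncomputable def canonicalVal (Δ : Set Form) (α : Form) : SV :=
  if α ∈ Δ then (if α.neg ∈ Δ then .t else .T) else .F

theorem canonicalVal_p1 {Δ : Set Form} {α : Form} : (canonicalVal Δ α).p1 = true ↔ α ∈ Δ := by
  unfold canonicalVal
  split_ifs <;> simp [SV.p1, *]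

namespace Saturated

variable {ψ α β : Form} {Δ : Set Form}

theorem canonicalVal_p2 (hS : Saturated E ψ Δ) : (canonicalVal Δ α).p2 = true ↔ α.neg ∈ Δ := by
  unfold canonicalVal
  split_ifs with hα <;> simp [SV.p2, hS.neg_mem, *]

theorem canonicalVal_and (hS : Saturated E ψ Δ) :
    (canonicalVal Δ (α.and β)).p1 = ((canonicalVal Δ α).p1 && (canonicalVal Δ β).p1) :=
  Bool.eq_iff_iff.2 (by simp only [Bool.and_eq_true, canonicalVal_p1, hS.mem_and])

theorem canonicalVal_or (hS : Saturated E ψ Δ) :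
    (canonicalVal Δ (α.or β)).p1 = ((canonicalVal Δ α).p1 || (canonicalVal Δ β).p1) :=
  Bool.eq_iff_iff.2 (by simp only [Bool.or_eq_true, canonicalVal_p1, hS.mem_or])

theorem canonicalVal_imp (hS : Saturated E ψ Δ) :
    (canonicalVal Δ (α.imp β)).p1 = (!(canonicalVal Δ α).p1 || (canonicalVal Δ β).p1) :=
  Bool.eq_iff_iff.2 (by
    simp only [Bool.or_eq_true, Bool.not_eq_true', Bool.eq_false_iff, ne_eq, canonicalVal_p1,
      hS.mem_imp, imp_iff_not_or])

theorem canonicalVal_neg_p1 (hS : Saturated E ψ Δ) :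
    (canonicalVal Δ α.neg).p1 = (canonicalVal Δ α).p2 :=
  Bool.eq_iff_iff.2 (by rw [canonicalVal_p1, hS.canonicalVal_p2])

theorem canonicalVal_neg_p2_le (hS : Saturated E ψ Δ) (hcf : ThmExt E (α.neg.neg.imp α)) :
    (canonicalVal Δ α.neg).p2 ≤ (canonicalVal Δ α).p1 :=
  Bool.le_iff_imp.2 (by simpa only [hS.canonicalVal_p2, canonicalVal_p1] using hS.mem_of_imp hcf)

theorem canonicalVal_circ_p1_le (hS : Saturated E ψ Δ) :
    (canonicalVal Δ α.circ).p1 ≤ !((canonicalVal Δ α).p1 && (canonicalVal Δ α).p2) :=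
  Bool.le_iff_imp.2 (by
    simpa only [Bool.not_eq_true', Bool.eq_false_iff, ne_eq, Bool.and_eq_true, canonicalVal_p1,
      hS.canonicalVal_p2] using hS.not_and_of_circ_mem)

theorem canonicalVal_circ_p1 (hS : Saturated E ψ Δ)
    (hciw : ThmExt E (α.circ.or (α.and α.neg))) :
    (canonicalVal Δ α.circ).p1 = !((canonicalVal Δ α).p1 && (canonicalVal Δ α).p2) := by
  refine le_antisymm hS.canonicalVal_circ_p1_le (Bool.le_iff_imp.2 fun h => ?_)
  simp only [Bool.not_eq_true', Bool.eq_false_iff, ne_eq, Bool.and_eq_true, canonicalVal_p1,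
    hS.canonicalVal_p2] at h ⊢
  exact (hS.mem_or.1 (hS.mem_of_thmExt hciw)).resolve_right (hS.mem_and.not.2 h)

theorem canonicalVal_circ_p2 (hS : Saturated E ψ Δ)
    (hci : ThmExt E (α.circ.neg.imp (α.and α.neg))) :
    (canonicalVal Δ α.circ).p2 = ((canonicalVal Δ α).p1 && (canonicalVal Δ α).p2) := by
  refine Bool.eq_iff_iff.2 ?_
  simp only [Bool.and_eq_true, canonicalVal_p1, hS.canonicalVal_p2]
  exact ⟨fun h => hS.mem_and.1 (hS.mem_of_imp hci h),
    fun h => hS.neg_mem fun hc => hS.not_and_of_circ_mem hc h⟩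

theorem negCond_extAx {L : ExtLogic} (hS : Saturated (extAx L) ψ Δ) :
    negCond L (canonicalVal Δ α.neg) (canonicalVal Δ α) := by
  cases L with
  | DmbCciw | DmbCci => exact hS.canonicalVal_neg_p1
  | DbC => exact ⟨hS.canonicalVal_neg_p1, hS.canonicalVal_neg_p2_le (.extra ⟨α, rfl⟩)⟩
  | DCi => exact ⟨hS.canonicalVal_neg_p1, hS.canonicalVal_neg_p2_le (.extra (.inr ⟨α, rfl⟩))⟩

theorem circCond_extAx {L : ExtLogic} (hS : Saturated (extAx L) ψ Δ) :
    circCond L (canonicalVal Δ α.circ) (canonicalVal Δ α) := by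
  cases L with
  | DmbCciw => exact hS.canonicalVal_circ_p1 (.extra ⟨α, rfl⟩)
  | DmbCci =>
    exact ⟨hS.canonicalVal_circ_p1 (.ciw_of_ci (.extra ⟨α, rfl⟩)),
      hS.canonicalVal_circ_p2 (.extra ⟨α, rfl⟩)⟩
  | DbC => exact hS.canonicalVal_circ_p1_le
  | DCi =>
    exact ⟨hS.canonicalVal_circ_p1 (.ciw_of_ci (.extra (.inl ⟨α, rfl⟩))),
      hS.canonicalVal_circ_p2 (.extra (.inl ⟨α, rfl⟩))⟩

end Saturated

namespace CanonicalRel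

theorem serial (Δ : CanonicalWorld E) : ∃ Δ', CanonicalRel E Δ Δ' := by
  obtain ⟨ψ, hS⟩ := Δ.2
  have hcons : ¬ Der E {β | β.obl ∈ Δ.1} (Form.var 0).bot := fun hd =>
    hS.1 (.mp (.thm (.bot_imp _ ψ)) (.mp (.thm (.OE _)) hd.obl))
  obtain ⟨Δ', hsub, hS'⟩ := exists_saturated_superset hcons
  exact ⟨⟨Δ', _, hS'⟩, hsub⟩

theorem exists_notMem (Δ : CanonicalWorld E) {α : Form} (h : α.obl ∉ Δ.1) :
    ∃ Δ', CanonicalRel E Δ Δ' ∧ α ∉ Δ'.1 := by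
  obtain ⟨ψ, hS⟩ := Δ.2
  obtain ⟨Δ', hsub, hS'⟩ :=
    exists_saturated_superset fun hd => h (hS.mem_of_der hd.obl)
  exact ⟨⟨Δ', α, hS'⟩, hsub, fun hα => hS'.1 (.hyp hα)⟩

end CanonicalRel

theorem canonicalVal_obl (Δ : CanonicalWorld E) (α : Form) :
    (canonicalVal Δ.1 α.obl).p1 = true ↔
      ∀ Δ', CanonicalRel E Δ Δ' → (canonicalVal Δ'.1 α).p1 = true := by
  simp only [canonicalVal_p1]
  refine ⟨fun h Δ' hR => hR h, fun h => by_contra fun hα => ?_⟩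
  obtain ⟨Δ', hR, hα'⟩ := CanonicalRel.exists_notMem Δ hα
  exact hα' (h Δ' hR)

theorem isModelExt_canonical (L : ExtLogic) :
    IsModelExt L (CanonicalRel (extAx L)) fun Δ => canonicalVal Δ.1 where
  serial := CanonicalRel.serial
  and_ := fun ⟨_, _, hS⟩ _ _ => hS.canonicalVal_and
  or_ := fun ⟨_, _, hS⟩ _ _ => hS.canonicalVal_or
  imp_ := fun ⟨_, _, hS⟩ _ _ => hS.canonicalVal_imp
  neg_ := fun ⟨_, _, hS⟩ _ => hS.negCond_extAx
  circ_ := fun ⟨_, _, hS⟩ _ => hS.circCond_extAx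
  obl_ := canonicalVal_obl

/-- Completeness of DmbCciw, DmbCci, DbC, DCi w.r.t. swap Kripke models. -/
theorem ext_completeness (L : ExtLogic) (Γ : Set Form) (φ : Form) :
    SemExt L Γ φ → DerivExt L Γ φ := by
  intro hsem
  suffices hd : Der (extAx L) Γ φ from hd.thmExt_or_exists_conj
  by_contra hnd
  obtain ⟨Δ, hΓΔ, hS⟩ := exists_saturated_superset hnd
  let w : CanonicalWorld (extAx L) := ⟨Δ, φ, hS⟩
  have hφ : (canonicalVal Δ φ).desig :=
    hsem _ _ _ ⟨w⟩ (isModelExt_canonical L) w fun γ hγ => canonicalVal_p1.2 (hΓΔ hγ)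
  exact hS.1 (.hyp (canonicalVal_p1.1 hφ))
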